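/- Let I_1, I_2, … be independent Bernoulli random variables with P(I_i = 1) = 1/(1 + (i-1)^s), let N_m = ∑_{i=1}^{m} I_i, and define the k-th record time event {L_k = n} = {N_{n-1} = k-1 and I_n = 1}. Then for n ≥ k ≥ 1, P(L_k = n) = S_s(n-1, k-1) / ∏_{i=1}^{n} (1 + (i-1)^s). -/

import Mathlib

/-!
Write `D m = ∏_{i ≤ m} (1 + (i - 1)^s)`; the variable `I_i` takes the values `1` and `0` in the
proportion `1 : (i - 1)^s`. Splitting on the independent variable `I_{m+1}` shows
that `D m · P(N_m = j)` satisfies the level-`s` Stirling recurrence; the boundary `j = 0` fits too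
because `I_1 = 1` almost surely (its weight is `0^s = 0`). Hence `D m · P(N_m = j) = S_s(m, j)`,
and `P(L_k = n) = P(N_{n-1} = k - 1) · P(I_n = 1)` by independence once more.
-/

open MeasureTheory ProbabilityTheory

/-- Stirling numbers of the first kind with level `s`. -/
def Slev (s : ℕ) : ℕ → ℕ → ℕ
  | 0, 0 => 1
  | 0, _ + 1 => 0
  | _ + 1, 0 => 0
  | n + 1, k + 1 => Slev s n k + n ^ s * Slev s n (k + 1)

theorem Slev_succ_succ (s n k : ℕ) :
    Slev s (n + 1) (k + 1) = Slev s n k + n ^ s * Slev s n (k + 1) := rfl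

theorem Slev_succ_zero {s : ℕ} (hs : 0 < s) (n : ℕ) : Slev s (n + 1) 0 = n ^ s * Slev s n 0 := by
  cases n <;> simp [Slev, hs.ne']

section Bernoulli

variable {Ω : Type*} [MeasurableSpace Ω] {μ : Measure Ω}

theorem measure_eq_zero_mul_one_add [IsProbabilityMeasure μ] {X : Ω → ℕ} (hX : Measurable X)
    (hval : ∀ ω, X ω = 0 ∨ X ω = 1) {q : ENNReal} (hq : q ≠ ⊤)
    (hp : μ {ω | X ω = 1} = 1 / (1 + q)) :
    μ {ω | X ω = 0} * (1 + q) = q := by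
  have hcompl : {ω | X ω = 0} = {ω | X ω = 1}ᶜ := by
    ext ω
    rcases hval ω with h | h <;> simp [h]
  have hone : μ {ω | X ω = 1} * (1 + q) = 1 :=
    hp ▸ ENNReal.div_mul_cancel (by simp) (by simp [hq])
  have hmeas_one : MeasurableSet {ω | X ω = 1} := hX (measurableSet_singleton 1)
  rw [hcompl, prob_compl_eq_one_sub hmeas_one,
    ENNReal.sub_mul fun _ _ => by simp [hq], one_mul, hone, ENNReal.add_sub_cancel_left (by simp)]

variable {ι : Type*} {I : ι → Ω → ℕ}

theorem measure_sum_eq_and_eq (hmeas : ∀ i, Measurable (I i)) (hindep : iIndepFun I μ)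
    {s : Finset ι} {j : ι} (hj : j ∉ s) (a b : ℕ) :
    μ {ω | ∑ i ∈ s, I i ω = a ∧ I j ω = b} =
      μ {ω | ∑ i ∈ s, I i ω = a} * μ {ω | I j ω = b} := by
  have := (hindep.indepFun_finsetSum_of_notMem hmeas hj).measure_inter_preimage_eq_mul
    {a} {b} (measurableSet_singleton a) (measurableSet_singleton b)
  simpa [Set.preimage, Set.ofPred_and, Finset.sum_apply] using this

variable [DecidableEq ι]

theorem measure_sum_insert_eq_zero (hmeas : ∀ i, Measurable (I i)) (hindep : iIndepFun I μ)
    {s : Finset ι} {j : ι} (hj : j ∉ s) :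
    μ {ω | ∑ i ∈ insert j s, I i ω = 0} =
      μ {ω | ∑ i ∈ s, I i ω = 0} * μ {ω | I j ω = 0} := by
  rw [← measure_sum_eq_and_eq hmeas hindep hj]
  congr 1
  ext ω
  simp [Finset.sum_insert hj, and_comm]

theorem measure_sum_insert_eq_succ (hmeas : ∀ i, Measurable (I i))
    (hval : ∀ i ω, I i ω = 0 ∨ I i ω = 1) (hindep : iIndepFun I μ)
    {s : Finset ι} {j : ι} (hj : j ∉ s) (a : ℕ) :
    μ {ω | ∑ i ∈ insert j s, I i ω = a + 1} =
      μ {ω | ∑ i ∈ s, I i ω = a + 1} * μ {ω | I j ω = 0} +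
        μ {ω | ∑ i ∈ s, I i ω = a} * μ {ω | I j ω = 1} := by
  have hsplit : {ω | ∑ i ∈ insert j s, I i ω = a + 1} =
      {ω | ∑ i ∈ s, I i ω = a + 1 ∧ I j ω = 0} ∪ {ω | ∑ i ∈ s, I i ω = a ∧ I j ω = 1} := by
    ext ω
    rcases hval j ω with h | h <;> simp [Finset.sum_insert hj, h, add_comm 1]
  have hdisj : Disjoint {ω | ∑ i ∈ s, I i ω = a + 1 ∧ I j ω = 0}
      {ω | ∑ i ∈ s, I i ω = a ∧ I j ω = 1} :=
    Set.disjoint_left.2 fun ω h₀ h₁ => by simp_all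
  have hmeas_sum : Measurable fun ω => ∑ i ∈ s, I i ω := Finset.measurable_sum _ fun i _ => hmeas i
  rw [hsplit, measure_union hdisj ((hmeas_sum (measurableSet_singleton a)).inter
      (hmeas j (measurableSet_singleton 1))),
    measure_sum_eq_and_eq hmeas hindep hj, measure_sum_eq_and_eq hmeas hindep hj]

end Bernoulli

section Records

variable {s : ℕ} {Ω : Type*} [MeasurableSpace Ω] {μ : Measure Ω} {I : ℕ → Ω → ℕ}

theorem measure_succ_eq_one_mul_one_add_pow
    (hp : ∀ i : ℕ, 1 ≤ i → μ {ω | I i ω = 1} = 1 / (1 + ((i - 1 : ℕ) : ENNReal) ^ s)) (m : ℕ) :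
    μ {ω | I (m + 1) ω = 1} * (1 + (m : ENNReal) ^ s) = 1 := by
  rw [hp (m + 1) (Nat.le_add_left 1 m), Nat.add_sub_cancel]
  exact ENNReal.div_mul_cancel (by simp) (by simp)

theorem measure_sum_Icc_mul_prod_eq_Slev [IsProbabilityMeasure μ] (hs : 0 < s)
    (hmeas : ∀ i, Measurable (I i))
    (hval : ∀ i ω, I i ω = 0 ∨ I i ω = 1) (hindep : iIndepFun I μ)
    (hp : ∀ i : ℕ, 1 ≤ i → μ {ω | I i ω = 1} = 1 / (1 + ((i - 1 : ℕ) : ENNReal) ^ s))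
    (m j : ℕ) :
    μ {ω | ∑ i ∈ Finset.Icc 1 m, I i ω = j} *
        ∏ i ∈ Finset.Icc 1 m, (1 + ((i - 1 : ℕ) : ENNReal) ^ s) = Slev s m j := by
  induction m generalizing j with
  | zero => cases j <;> simp [Slev]
  | succ m ih =>
    have hnew : m + 1 ∉ Finset.Icc 1 m := by simp
    have hp₀ : μ {ω | I (m + 1) ω = 0} * (1 + (m : ENNReal) ^ s) = (m : ENNReal) ^ s :=
      measure_eq_zero_mul_one_add (hmeas _) (hval _) (by simp)
        (by rw [hp (m + 1) (Nat.le_add_left 1 m), Nat.add_sub_cancel])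
    rw [← Finset.insert_Icc_right_eq_Icc_add_one (by omega), Finset.prod_insert hnew,
      Nat.add_sub_cancel]
    cases j with
    | zero =>
      rw [measure_sum_insert_eq_zero hmeas hindep hnew, Slev_succ_zero hs]
      calc _ = (μ {ω | I (m + 1) ω = 0} * (1 + (m : ENNReal) ^ s)) *
            (μ {ω | ∑ i ∈ Finset.Icc 1 m, I i ω = 0} *
              ∏ i ∈ Finset.Icc 1 m, (1 + ((i - 1 : ℕ) : ENNReal) ^ s)) := by ring
        _ = _ := by rw [hp₀, ih]; push_cast; ring
    | succ t =>
      rw [measure_sum_insert_eq_succ hmeas hval hindep hnew, Slev_succ_succ]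
      calc _ = (μ {ω | I (m + 1) ω = 0} * (1 + (m : ENNReal) ^ s)) *
            (μ {ω | ∑ i ∈ Finset.Icc 1 m, I i ω = t + 1} *
              ∏ i ∈ Finset.Icc 1 m, (1 + ((i - 1 : ℕ) : ENNReal) ^ s)) +
          (μ {ω | I (m + 1) ω = 1} * (1 + (m : ENNReal) ^ s)) *
            (μ {ω | ∑ i ∈ Finset.Icc 1 m, I i ω = t} *
              ∏ i ∈ Finset.Icc 1 m, (1 + ((i - 1 : ℕ) : ENNReal) ^ s)) := by ring
        _ = _ := by rw [hp₀, measure_succ_eq_one_mul_one_add_pow hp, ih, ih]; push_cast; ring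

end Records

theorem stmt_10 (s : ℕ) (hs : 0 < s)
    {Ω : Type*} [MeasurableSpace Ω] (μ : Measure Ω) [IsProbabilityMeasure μ]
    (I : ℕ → Ω → ℕ)
    (hmeas : ∀ i, Measurable (I i))
    (hval : ∀ i ω, I i ω = 0 ∨ I i ω = 1)
    (hindep : iIndepFun I μ)
    (hp : ∀ i : ℕ, 1 ≤ i → μ {ω | I i ω = 1} = 1 / (1 + ((i - 1 : ℕ) : ENNReal) ^ s))
    (k n : ℕ) (hk : 1 ≤ k) (hn : k ≤ n) :
    μ {ω | (∑ i ∈ Finset.Icc 1 (n - 1), I i ω) = k - 1 ∧ I n ω = 1} =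
      (Slev s (n - 1) (k - 1) : ENNReal) /
        ∏ i ∈ Finset.Icc 1 n, (1 + ((i - 1 : ℕ) : ENNReal) ^ s) := by
  obtain ⟨m, rfl⟩ : ∃ m, n = m + 1 := ⟨n - 1, by omega⟩
  have hnew : m + 1 ∉ Finset.Icc 1 m := by simp
  rw [Nat.add_sub_cancel, ENNReal.eq_div_iff (Finset.prod_ne_zero_iff.2 fun i _ => by simp)
    (ENNReal.prod_ne_top fun i _ => by simp)]
  calc _ = (μ {ω | ∑ i ∈ Finset.Icc 1 m, I i ω = k - 1} *
          ∏ i ∈ Finset.Icc 1 m, (1 + ((i - 1 : ℕ) : ENNReal) ^ s)) *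
        (μ {ω | I (m + 1) ω = 1} * (1 + (m : ENNReal) ^ s)) := by
        rw [← Finset.insert_Icc_right_eq_Icc_add_one (by omega), Finset.prod_insert hnew,
          Nat.add_sub_cancel, measure_sum_eq_and_eq hmeas hindep hnew]
        ring
    _ = Slev s m (k - 1) := by
        rw [measure_sum_Icc_mul_prod_eq_Slev hs hmeas hval hindep hp,
          measure_succ_eq_one_mul_one_add_pow hp, mul_one]
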